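/- Let θ > 0, let φ ∈ ℝ^N with ‖φ‖₂ = 1, and let C be the real symmetric 2N×2N matrix with N×N blocks [[I_N + θφφᵀ, θφφᵀ],[θφφᵀ, I_N + θφφᵀ]] (the rank-one spiked impropriety model). Then C is positive definite, Γ(C) = (θ/(1+θ)) · [[0, φφᵀ],[φφᵀ, 0]], and the spectrum of Γ(C) consists of the simple eigenvalues θ/(1+θ) and −θ/(1+θ) together with the eigenvalue 0 of multiplicity 2N−2; in particular there is exactly one nonzero population impropriety coefficient, equal to θ/(1+θ). -/

import Mathlib

/-!
With `P = φ φᵀ` (a projection, as `‖φ‖ = 1`), `E = [[P, 0], [0, P]]` and `D = [[0, P], [P, 0]]`,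
the model is `C = 1 + θ (E + D)`, so `Ċ = 1 + θ E` and `C̈ = θ D`. Since `E` is a projection,
`Ċ^{1/2} = 1 + (√(1+θ) - 1) E` and `Ċ^{-1/2} = 1 + (1/√(1+θ) - 1) E`, and since `E` acts as the
identity on `D` from both sides, `Γ(C) = θ D / (1 + θ)`. Finally `D` factors through a
two-dimensional space on which it acts as `[[0, 1], [1, 0]]`, which gives the spectrum.
-/

open Matrix Polynomial

/-- The proper part `Ċ` of a real `2N × 2N` matrix `C` with blocks `[[A, B],[B′, D]]`:
`Ċ = (1/2)·[[A+D, B−B′],[B′−B, A+D]]`. -/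
noncomputable def dotPart {N : ℕ} (C : Matrix (Fin N ⊕ Fin N) (Fin N ⊕ Fin N) ℝ) :
    Matrix (Fin N ⊕ Fin N) (Fin N ⊕ Fin N) ℝ :=
  (1/2 : ℝ) • Matrix.fromBlocks (C.toBlocks₁₁ + C.toBlocks₂₂) (C.toBlocks₁₂ - C.toBlocks₂₁)
    (C.toBlocks₂₁ - C.toBlocks₁₂) (C.toBlocks₁₁ + C.toBlocks₂₂)

/-- The improper part `C̈ = C − Ċ`. -/
noncomputable def ddotPart {N : ℕ} (C : Matrix (Fin N ⊕ Fin N) (Fin N ⊕ Fin N) ℝ) :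
    Matrix (Fin N ⊕ Fin N) (Fin N ⊕ Fin N) ℝ :=
  C - dotPart C

open scoped ComplexOrder in
/-- The positive semidefinite square root of a positive semidefinite matrix, as defined in the
older Mathlib (`Matrix.PosSemidef.sqrt`, since removed). -/
noncomputable def Matrix.PosSemidef.sqrt {n 𝕜 : Type*} [Fintype n] [RCLike 𝕜] [DecidableEq n]
    {A : Matrix n n 𝕜} (hA : A.PosSemidef) : Matrix n n 𝕜 :=
  hA.1.eigenvectorUnitary.1 * diagonal ((↑) ∘ (√·) ∘ hA.1.eigenvalues) *
  (star hA.1.eigenvectorUnitary : Matrix n n 𝕜)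

/-- `Γ(C) = Ċ^{-1/2} C̈ Ċ^{-1/2}`, where `Ċ^{1/2}` is the (unique) positive semidefinite
(hence, as `Ċ` is positive definite, the unique symmetric positive definite) square root
of `Ċ`, given a proof `h` that `Ċ` is positive definite. -/
noncomputable def Gamma {N : ℕ} (C : Matrix (Fin N ⊕ Fin N) (Fin N ⊕ Fin N) ℝ)
    (h : (dotPart C).PosDef) : Matrix (Fin N ⊕ Fin N) (Fin N ⊕ Fin N) ℝ :=
  (Matrix.PosSemidef.sqrt h.posSemidef)⁻¹ * ddotPart C * (Matrix.PosSemidef.sqrt h.posSemidef)⁻¹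

open scoped MatrixOrder ComplexOrder in
theorem Matrix.PosSemidef.sqrt_eq_of_sq_eq {n 𝕜 : Type*} [Fintype n] [DecidableEq n] [RCLike 𝕜]
    {A S : Matrix n n 𝕜} (hA : A.PosSemidef) (hS : S.PosSemidef) (h : S ^ 2 = A) :
    hA.sqrt = S := by
  have hcfc : hA.sqrt = hA.1.cfc Real.sqrt := by
    simp [Matrix.PosSemidef.sqrt, Matrix.IsHermitian.cfc]
  rw [hcfc, ← hA.1.cfc_eq, ← cfcₙ_eq_cfc (hf0 := Real.sqrt_zero),
    ← CFC.sqrt_eq_real_sqrt A hA.nonneg]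
  exact CFC.sqrt_unique (by rw [← h, sq]) hS.nonneg

theorem Gamma_eq_of_sq_eq {N : ℕ} {C S : Matrix (Fin N ⊕ Fin N) (Fin N ⊕ Fin N) ℝ}
    (h : (dotPart C).PosDef) (hS : S.PosSemidef) (hSq : S ^ 2 = dotPart C) :
    Gamma C h = S⁻¹ * ddotPart C * S⁻¹ := by
  rw [Gamma, h.posSemidef.sqrt_eq_of_sq_eq hS hSq]

section Idempotent

variable {K A : Type*} [Field K] [Ring A] [Algebra K A] {E : A}

theorem IsIdempotentElem.one_add_smul_mul_one_add_smul (hE : IsIdempotentElem E) (a b : K) :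
    (1 + a • E) * (1 + b • E) = 1 + (a + b + a * b) • E := by
  simp only [mul_add, add_mul, one_mul, mul_one, smul_mul_smul_comm, hE.eq]
  module

theorem IsIdempotentElem.one_add_smul_sq (hE : IsIdempotentElem E) (s : K) :
    (1 + (s - 1) • E) ^ 2 = 1 + (s ^ 2 - 1) • E := by
  rw [sq, hE.one_add_smul_mul_one_add_smul]
  ring_nf

theorem IsIdempotentElem.one_add_smul_mul_one_add_inv_smul (hE : IsIdempotentElem E) {s : K}
    (hs : s ≠ 0) : (1 + (s - 1) • E) * (1 + (s⁻¹ - 1) • E) = 1 := by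
  rw [hE.one_add_smul_mul_one_add_smul]
  have : s - 1 + (s⁻¹ - 1) + (s - 1) * (s⁻¹ - 1) = 0 := by field_simp; ring
  rw [this, zero_smul, add_zero]

theorem one_add_smul_mul_of_mul_left_eq {D : A} (hED : E * D = D) (a : K) :
    (1 + a • E) * D = (1 + a) • D := by
  rw [add_mul, one_mul, smul_mul_assoc, hED, add_smul, one_smul]

theorem mul_one_add_smul_of_mul_right_eq {D : A} (hDE : D * E = D) (a : K) :
    D * (1 + a • E) = (1 + a) • D := by
  rw [mul_add, mul_one, mul_smul_comm, hDE, add_smul, one_smul]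

end Idempotent

theorem Matrix.vecMulVec_sumElim {m n R : Type*} [Mul R] (a b : m → R) (c d : n → R) :
    vecMulVec (Sum.elim a b) (Sum.elim c d)
      = fromBlocks (vecMulVec a c) (vecMulVec a d) (vecMulVec b c) (vecMulVec b d) := by
  ext (i | i) (j | j) <;> rfl

section Blocks

variable {m R : Type*} [Fintype m]

theorem Matrix.isStarProjection_vecMulVec_star [CommRing R] [StarRing R] {φ : m → R}
    (hφ : star φ ⬝ᵥ φ = 1) : IsStarProjection (vecMulVec φ (star φ)) where
  isIdempotentElem := by rw [IsIdempotentElem, vecMulVec_mul_vecMulVec, hφ, one_smul]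
  isSelfAdjoint := by rw [IsSelfAdjoint, star_eq_conjTranspose, conjTranspose_vecMulVec, star_star]

section Ring

variable [Ring R] {P : Matrix m m R}

theorem IsIdempotentElem.fromBlocks_diag (hP : IsIdempotentElem P) :
    IsIdempotentElem (fromBlocks P 0 0 P) := by
  simp [IsIdempotentElem, fromBlocks_multiply, hP.eq]

theorem IsIdempotentElem.fromBlocks_diag_mul_fromBlocks_antidiag (hP : IsIdempotentElem P) :
    fromBlocks P 0 0 P * fromBlocks 0 P P 0 = fromBlocks 0 P P 0 := by
  simp [fromBlocks_multiply, hP.eq]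

theorem IsIdempotentElem.fromBlocks_antidiag_mul_fromBlocks_diag (hP : IsIdempotentElem P) :
    fromBlocks 0 P P 0 * fromBlocks P 0 0 P = fromBlocks 0 P P 0 := by
  simp [fromBlocks_multiply, hP.eq]

end Ring

theorem IsStarProjection.fromBlocks_diag [Ring R] [StarRing R] {P : Matrix m m R}
    (hP : IsStarProjection P) : IsStarProjection (fromBlocks P 0 0 P) where
  isIdempotentElem := hP.isIdempotentElem.fromBlocks_diag
  isSelfAdjoint := IsHermitian.fromBlocks hP.isSelfAdjoint (by simp) hP.isSelfAdjoint

-- The matrix factors through `Fin 2`, and `charpoly_mul_comm_of_le` reduces to the `2 × 2` factor.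
theorem Matrix.charpoly_smul_fromBlocks_antidiag_vecMulVec_self [DecidableEq m] [CommRing R]
    [Nontrivial R] {φ : m → R} (hφ : φ ⬝ᵥ φ = 1) (a : R) :
    (a • fromBlocks 0 (vecMulVec φ φ) (vecMulVec φ φ) 0).charpoly
      = X ^ (2 * Fintype.card m - 2) * (X - C a) * (X + C a) := by
  let U : Matrix (m ⊕ m) (Fin 2) R := of fun i => ![Sum.elim (a • φ) 0 i, Sum.elim 0 (a • φ) i]
  let V : Matrix (Fin 2) (m ⊕ m) R := of ![Sum.elim 0 φ, Sum.elim φ 0]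
  have hUV : a • fromBlocks 0 (vecMulVec φ φ) (vecMulVec φ φ) 0 = U * V := by
    ext (i | i) (j | j) <;> simp [U, V, mul_apply, Fin.sum_univ_two, vecMulVec_apply, mul_assoc]
  have hVU : V * U = !![0, a; a, 0] := by
    have hφa : ∑ i, φ i * (a * φ i) = a := by
      simp_rw [mul_left_comm _ a, ← Finset.mul_sum]
      exact (congrArg (a * ·) hφ).trans (mul_one a)
    ext k l
    fin_cases k <;> fin_cases l <;> simp [U, V, mul_apply, Fintype.sum_sum_type, hφa]
  have hm : 0 < Fintype.card m := by
    rw [Fintype.card_pos_iff]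
    by_contra hm
    simp [dotProduct, not_nonempty_iff.mp hm] at hφ
  have hcard : Fintype.card (Fin 2) ≤ Fintype.card (m ⊕ m) := by
    rw [Fintype.card_fin, Fintype.card_sum]
    omega
  rw [hUV, charpoly_mul_comm_of_le _ _ hcard, hVU, charpoly_fin_two, trace_fin_two_of,
    det_fin_two_of, Fintype.card_sum, Fintype.card_fin, two_mul]
  simp only [add_zero, mul_zero, zero_sub, map_zero, zero_mul, sub_zero, map_neg, map_mul]
  ring

end Blocks

section SpikedModel

variable {m : Type*} [DecidableEq m]

noncomputable def spikedCov (θ : ℝ) (φ : m → ℝ) : Matrix (m ⊕ m) (m ⊕ m) ℝ :=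
  fromBlocks (1 + θ • vecMulVec φ φ) (θ • vecMulVec φ φ) (θ • vecMulVec φ φ) (1 + θ • vecMulVec φ φ)

theorem spikedCov_eq (θ : ℝ) (φ : m → ℝ) :
    spikedCov θ φ = 1 + θ • vecMulVec (Sum.elim φ φ) (Sum.elim φ φ) := by
  rw [spikedCov, vecMulVec_sumElim, ← fromBlocks_one, fromBlocks_smul, fromBlocks_add]
  simp

theorem posDef_spikedCov [Fintype m] {θ : ℝ} (hθ : 0 ≤ θ) (φ : m → ℝ) :
    (spikedCov θ φ).PosDef := by
  rw [spikedCov_eq]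
  exact PosDef.one.add_posSemidef ((posSemidef_vecMulVec_self_star _).smul hθ)

end SpikedModel

theorem dotPart_spikedCov {N : ℕ} (θ : ℝ) (φ : Fin N → ℝ) :
    dotPart (spikedCov θ φ) = 1 + θ • fromBlocks (vecMulVec φ φ) 0 0 (vecMulVec φ φ) := by
  rw [dotPart, spikedCov]
  simp only [toBlocks_fromBlocks₁₁, toBlocks_fromBlocks₁₂, toBlocks_fromBlocks₂₁,
    toBlocks_fromBlocks₂₂, sub_self, ← fromBlocks_one, fromBlocks_smul, fromBlocks_add]
  congr 1 <;> module

theorem ddotPart_spikedCov {N : ℕ} (θ : ℝ) (φ : Fin N → ℝ) :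
    ddotPart (spikedCov θ φ) = θ • fromBlocks 0 (vecMulVec φ φ) (vecMulVec φ φ) 0 := by
  rw [ddotPart, dotPart_spikedCov, spikedCov, ← fromBlocks_one, fromBlocks_smul, fromBlocks_add,
    fromBlocks_smul, sub_eq_add_neg, fromBlocks_neg, fromBlocks_add]
  congr 1 <;> module

open scoped MatrixOrder in
theorem gamma_spikedCov {N : ℕ} {θ : ℝ} (hθ : -1 < θ) {φ : Fin N → ℝ} (hφ : φ ⬝ᵥ φ = 1)
    (hd : (dotPart (spikedCov θ φ)).PosDef) :
    Gamma (spikedCov θ φ) hd = (θ / (1 + θ)) • fromBlocks 0 (vecMulVec φ φ) (vecMulVec φ φ) 0 := by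
  set E := fromBlocks (vecMulVec φ φ) 0 0 (vecMulVec φ φ)
  set D := fromBlocks 0 (vecMulVec φ φ) (vecMulVec φ φ) 0
  set s := √(1 + θ)
  have hs : 0 < s := Real.sqrt_pos.mpr (by linarith)
  have hP : IsStarProjection (vecMulVec φ φ) := isStarProjection_vecMulVec_star hφ
  have hE : IsStarProjection E := hP.fromBlocks_diag
  have hS : (1 + (s - 1) • E).PosSemidef := by
    rw [show 1 + (s - 1) • E = (1 - E) + s • E by module]
    exact (nonneg_iff_posSemidef.mp hE.one_sub_nonneg).add
      ((nonneg_iff_posSemidef.mp hE.nonneg).smul hs.le)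
  have hSq : (1 + (s - 1) • E) ^ 2 = dotPart (spikedCov θ φ) := by
    rw [hE.isIdempotentElem.one_add_smul_sq, Real.sq_sqrt (by linarith), dotPart_spikedCov,
      add_sub_cancel_left]
  have hSinv : (1 + (s - 1) • E)⁻¹ = 1 + (s⁻¹ - 1) • E :=
    inv_eq_right_inv (hE.isIdempotentElem.one_add_smul_mul_one_add_inv_smul hs.ne')
  have hDT : (1 + (s⁻¹ - 1) • E) * D * (1 + (s⁻¹ - 1) • E) = (s⁻¹ * s⁻¹) • D := by
    rw [one_add_smul_mul_of_mul_left_eq hP.isIdempotentElem.fromBlocks_diag_mul_fromBlocks_antidiag,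
      smul_mul_assoc,
      mul_one_add_smul_of_mul_right_eq hP.isIdempotentElem.fromBlocks_antidiag_mul_fromBlocks_diag,
      smul_smul, add_sub_cancel]
  rw [Gamma_eq_of_sq_eq hd hS hSq, hSinv, ddotPart_spikedCov, mul_smul_comm, smul_mul_assoc, hDT,
    smul_smul]
  congr 1
  rw [← mul_inv, Real.mul_self_sqrt (by linarith), div_eq_mul_inv]

theorem statement19_general (N : ℕ) (θ : ℝ) (hθ : 0 < θ)
    (φ : Fin N → ℝ) (hφ : ∑ i, φ i ^ 2 = 1)
    (hd : (dotPart (Matrix.fromBlocks (1 + θ • Matrix.vecMulVec φ φ) (θ • Matrix.vecMulVec φ φ)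
        (θ • Matrix.vecMulVec φ φ) (1 + θ • Matrix.vecMulVec φ φ))).PosDef) :
    (Matrix.fromBlocks (1 + θ • Matrix.vecMulVec φ φ) (θ • Matrix.vecMulVec φ φ)
        (θ • Matrix.vecMulVec φ φ) (1 + θ • Matrix.vecMulVec φ φ)).PosDef ∧
    Gamma (Matrix.fromBlocks (1 + θ • Matrix.vecMulVec φ φ) (θ • Matrix.vecMulVec φ φ)
        (θ • Matrix.vecMulVec φ φ) (1 + θ • Matrix.vecMulVec φ φ)) hd
      = (θ / (1 + θ)) • Matrix.fromBlocks 0 (Matrix.vecMulVec φ φ) (Matrix.vecMulVec φ φ) 0 ∧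
    (Gamma (Matrix.fromBlocks (1 + θ • Matrix.vecMulVec φ φ) (θ • Matrix.vecMulVec φ φ)
        (θ • Matrix.vecMulVec φ φ) (1 + θ • Matrix.vecMulVec φ φ)) hd).charpoly
      = X ^ (2 * N - 2) * (X - C (θ / (1 + θ))) * (X + C (θ / (1 + θ))) := by
  have hφ' : φ ⬝ᵥ φ = 1 := by simpa [dotProduct, sq] using hφ
  have hΓ := gamma_spikedCov (by linarith) hφ' hd
  refine ⟨posDef_spikedCov hθ.le φ, hΓ, ?_⟩
  rw [show Gamma _ hd = _ from hΓ, charpoly_smul_fromBlocks_antidiag_vecMulVec_self hφ',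
    Fintype.card_fin]

theorem statement19 (N : ℕ) (hN : 1 ≤ N) (θ : ℝ) (hθ : 0 < θ)
    (φ : Fin N → ℝ) (hφ : ∑ i, φ i ^ 2 = 1)
    (hd : (dotPart (Matrix.fromBlocks (1 + θ • Matrix.vecMulVec φ φ) (θ • Matrix.vecMulVec φ φ)
        (θ • Matrix.vecMulVec φ φ) (1 + θ • Matrix.vecMulVec φ φ))).PosDef) :
    (Matrix.fromBlocks (1 + θ • Matrix.vecMulVec φ φ) (θ • Matrix.vecMulVec φ φ)
        (θ • Matrix.vecMulVec φ φ) (1 + θ • Matrix.vecMulVec φ φ)).PosDef ∧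
    Gamma (Matrix.fromBlocks (1 + θ • Matrix.vecMulVec φ φ) (θ • Matrix.vecMulVec φ φ)
        (θ • Matrix.vecMulVec φ φ) (1 + θ • Matrix.vecMulVec φ φ)) hd
      = (θ / (1 + θ)) • Matrix.fromBlocks 0 (Matrix.vecMulVec φ φ) (Matrix.vecMulVec φ φ) 0 ∧
    (Gamma (Matrix.fromBlocks (1 + θ • Matrix.vecMulVec φ φ) (θ • Matrix.vecMulVec φ φ)
        (θ • Matrix.vecMulVec φ φ) (1 + θ • Matrix.vecMulVec φ φ)) hd).charpoly
      = X ^ (2 * N - 2) * (X - C (θ / (1 + θ))) * (X + C (θ / (1 + θ))) :=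
  statement19_general N θ hθ φ hφ hd
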